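/- Suppose {a_n}_{n=0}^∞ is a Stieltjes moment sequence with representing measure μ, κ is an integer ≥ 2, {a_n^{1/κ}}_{n=0}^∞ is a Stieltjes moment sequence with representing measure ν, and μ((θ1,θ2)) = 0 for some real θ1, θ2 with 0 < θ1 < θ2 < θ3 := sup supp μ < ∞. Set α = (θ1/θ3)·θ3^{1/κ}, β = θ2^{1/κ}, ι_s = 1 + ⌊log(θ3/θ1)/log(θ3/θ2)⌋ and ι_s* = 1 + ⌊log(θ3/θ2)/log(θ2/θ1)⌋. If any of the following holds: (i) κ ≥ ι_s* and β ∈ supp ν; (ii) ι_s ≥ ι_s* and β ∈ supp ν; (iii) ι_s ≥ 3 and β ∈ supp ν; (iv) ι_s ≥ 4; (v) ι_s* = 1; then ν((α,β)) = 0. -/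

import Mathlib

open MeasureTheory

/-- The closed support of a Borel measure: the set of points all of whose open
neighbourhoods have positive measure. -/
def msupport {X : Type*} [TopologicalSpace X] [MeasurableSpace X] (μ : Measure X) : Set X :=
  {x | ∀ U : Set X, IsOpen U → x ∈ U → 0 < μ U}

/-- `μ` is a representing measure (on `[0,∞)`, modelled as a measure on `ℝ` vanishing on
`(-∞,0)`) of the Stieltjes moment sequence `a`. -/
def IsRepMeas (a : ℕ → ℝ) (μ : Measure ℝ) : Prop :=
  (∀ n, 0 ≤ a n) ∧ μ (Set.Iio 0) = 0 ∧
    ∀ n : ℕ, ∫⁻ x, ENNReal.ofReal (x ^ n) ∂μ = ENNReal.ofReal (a n)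

/-- `a` is a Stieltjes moment sequence. -/
def IsStieltjes (a : ℕ → ℝ) : Prop :=
  ∃ μ : Measure ℝ, IsRepMeas a μ

/-- A Stieltjes moment sequence is determinate if it has a unique representing measure. -/
def IsDeterminate (a : ℕ → ℝ) : Prop :=
  ∀ μ ν : Measure ℝ, IsRepMeas a μ → IsRepMeas a ν → μ = ν

/-!
Both `μ` and the `κ`-fold multiplicative convolution power `ν^{*κ}` represent `a`, since the
moments of `ν^{*κ}` are `(a_n^{1/κ})^κ`. Both live on `[0, θ3]` (for `ν` because of the growth
`a_n^{1/κ} ≤ a_0^{1/κ} θ3^{n/κ}`), so Weierstrass approximation gives `μ = ν^{*κ}`. Hence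
`T := θ3^{1/κ}` lies in `supp ν`, and every product of `κ` points of `supp ν` lies in `supp μ`,
so outside `(θ1, θ2)`.

Let `y ∈ (α, β) ∩ supp ν` and `s = y/T`, `t = β/T`. The sequence `θ3 s^j = y^j T^{κ-j}` is above
`θ1` at `j = 1` (this is `y > α`), below `θ2` at `j = κ`, and never in the gap, so it is `≥ θ2` at
`j = 1` and jumps over the gap in a single step: `θ2 ≤ θ3 s` and `θ2 s ≤ θ1`, i.e.
`θ2/θ1 ≤ θ3/θ2`. If `β ∈ supp ν`, the same jump for `θ3 s t^j = y β^j T^{κ-1-j}` gives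
`θ2 t ≤ θ1`, i.e. `(θ2/θ1)^κ ≤ θ3/θ2`. Each of (i)–(v) contradicts one of these two bounds.
-/

open Set Filter Topology
open scoped ENNReal

namespace MeasureTheory

lemma msupport_eq_support {X : Type*} [TopologicalSpace X] [MeasurableSpace X] (μ : Measure X) :
    msupport μ = μ.support := by
  ext x
  simp only [msupport, Measure.support_eq_forall_isOpen, mem_ofPred_eq]
  exact forall_congr' fun _ => imp.swap

lemma continuous_integral_continuousMap {X : Type*} [TopologicalSpace X] [CompactSpace X]
    [MeasurableSpace X] [BorelSpace X] (μ : Measure X) [IsFiniteMeasure μ] :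
    Continuous fun f : C(X, ℝ) => ∫ x, f x ∂μ :=
  (continuous_integral.comp (ContinuousMap.toLp 1 μ ℝ).continuous).congr fun f =>
    integral_congr_ae (ContinuousMap.coeFn_toLp μ f)

lemma ext_of_integral_pow_eq {μ ν : Measure ℝ} [IsFiniteMeasure μ] [IsFiniteMeasure ν] {a b : ℝ}
    (hμ : ∀ᵐ x ∂μ, x ∈ Icc a b) (hν : ∀ᵐ x ∂ν, x ∈ Icc a b)
    (h : ∀ n : ℕ, ∫ x, x ^ n ∂μ = ∫ x, x ^ n ∂ν) : μ = ν := by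
  have hK : MeasurableSet (Icc a b) := measurableSet_Icc
  have hint {ρ : Measure ℝ} [IsFiniteMeasure ρ] (hρ : ∀ᵐ x ∂ρ, x ∈ Icc a b) (n : ℕ) :
      Integrable (fun x => x ^ n) ρ := by
    rw [← Measure.restrict_eq_self_of_ae_mem hρ]
    exact (continuous_pow n).continuousOn.integrableOn_compact isCompact_Icc
  have hpoly (p : Polynomial ℝ) : ∫ x, p.eval x ∂μ = ∫ x, p.eval x ∂ν := by
    simp_rw [Polynomial.eval_eq_sum_range]
    rw [integral_finsetSum _ fun i _ => (hint hμ i).const_mul _,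
      integral_finsetSum _ fun i _ => (hint hν i).const_mul _]
    simp_rw [integral_const_mul, h]
  have hcomap {ρ : Measure ℝ} (hρ : ∀ᵐ x ∂ρ, x ∈ Icc a b) (f : ℝ → ℝ) :
      ∫ x : Icc a b, f x ∂(ρ.comap Subtype.val) = ∫ x, f x ∂ρ := by
    rw [integral_subtype_comap hK, Measure.restrict_eq_self_of_ae_mem hρ]
  suffices hcomap_eq : μ.comap Subtype.val = ν.comap (Subtype.val : Icc a b → ℝ) by
    rw [← Measure.restrict_eq_self_of_ae_mem hμ, ← Measure.restrict_eq_self_of_ae_mem hν,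
      ← map_comap_subtype_coe hK, ← map_comap_subtype_coe hK, hcomap_eq]
  have hdense : Dense (polynomialFunctions (Icc a b) : Set C(Icc a b, ℝ)) := by
    rw [dense_iff_closure_eq, ← Subalgebra.topologicalClosure_coe,
      polynomialFunctions_closure_eq_top, Algebra.coe_top]
  have heq := (continuous_integral_continuousMap (μ.comap Subtype.val)).ext_on hdense
    (continuous_integral_continuousMap (ν.comap Subtype.val)) (by
      rintro _ ⟨p, -, rfl⟩
      simpa [hcomap hμ (Polynomial.eval · p), hcomap hν (Polynomial.eval · p)] using hpoly p)
  exact ext_of_forall_integral_eq_of_IsFiniteMeasure fun f => congrFun heq f.toContinuousMap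

section Convolution

variable {M : Type*} [Monoid M] [MeasurableSpace M]

noncomputable def mconvPow (ν : Measure M) : ℕ → Measure M
  | 0 => Measure.dirac 1
  | k + 1 => ν ∗ₘ mconvPow ν k

instance (ν : Measure M) [SFinite ν] (k : ℕ) : SFinite (mconvPow ν k) := by
  induction k with
  | zero => exact inferInstanceAs (SFinite (Measure.dirac 1))
  | succ k ih => exact inferInstanceAs (SFinite (ν ∗ₘ mconvPow ν k))

lemma ae_mem_mconv [MeasurableMul₂ M] {μ ν : Measure M} [SFinite ν] {s t u : Set M}
    (hu : MeasurableSet u) (hst : ∀ x ∈ s, ∀ y ∈ t, x * y ∈ u) (hμ : ∀ᵐ x ∂μ, x ∈ s)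
    (hν : ∀ᵐ y ∂ν, y ∈ t) : ∀ᵐ z ∂(μ ∗ₘ ν), z ∈ u := by
  refine (ae_map_iff measurable_mul.aemeasurable hu).mpr ?_
  filter_upwards [Measure.quasiMeasurePreserving_fst.ae hμ,
    Measure.quasiMeasurePreserving_snd.ae hν] with p hp1 hp2 using hst _ hp1 _ hp2

variable [TopologicalSpace M]

lemma one_mem_support_mconvPow_zero (ν : Measure M) : (1 : M) ∈ (mconvPow ν 0).support :=
  (Measure.mem_support_iff_forall 1).mpr fun U hU => by simp [mconvPow, mem_of_mem_nhds hU]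

variable [MeasurableMul₂ M] [ContinuousMul M]

lemma mul_mem_support_mconv {μ ν : Measure M} [SFinite ν] {x y : M} (hx : x ∈ μ.support)
    (hy : y ∈ ν.support) : x * y ∈ (μ ∗ₘ ν).support := by
  rw [Measure.mem_support_iff_forall] at hx hy ⊢
  intro U hU
  obtain ⟨u, hu, v, hv, huv⟩ :=
    mem_nhds_prod_iff.mp (continuous_mul.continuousAt.preimage_mem_nhds (x := (x, y)) hU)
  calc 0 < μ u * ν v := ENNReal.mul_pos (hx u hu).ne' (hy v hv).ne'
    _ = μ.prod ν (u ×ˢ v) := (Measure.prod_prod u v).symm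
    _ ≤ μ.prod ν ((fun p : M × M => p.1 * p.2) ⁻¹' U) := measure_mono huv
    _ ≤ (μ ∗ₘ ν) U := Measure.le_map_apply measurable_mul.aemeasurable U

lemma pow_mul_mem_support_mconvPow {ν : Measure M} [SFinite ν] {u x : M} {k : ℕ}
    (hu : u ∈ ν.support) (hx : x ∈ (mconvPow ν k).support) (j : ℕ) :
    u ^ j * x ∈ (mconvPow ν (j + k)).support := by
  induction j with
  | zero => simpa using hx
  | succ j ih =>
    rw [pow_succ', mul_assoc, Nat.add_right_comm]
    exact mul_mem_support_mconv hu ih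

end Convolution

section RealConvolution

variable {ν : Measure ℝ} [SFinite ν]

lemma lintegral_ofReal_pow_mconvPow (hν : ∀ᵐ x ∂ν, 0 ≤ x) (n k : ℕ) :
    ∫⁻ x, ENNReal.ofReal (x ^ n) ∂(mconvPow ν k) = (∫⁻ x, ENNReal.ofReal (x ^ n) ∂ν) ^ k := by
  have hmeas : Measurable fun x : ℝ => ENNReal.ofReal (x ^ n) := by fun_prop
  induction k with
  | zero => simp [mconvPow, lintegral_dirac' _ hmeas]
  | succ k ih =>
    calc ∫⁻ x, ENNReal.ofReal (x ^ n) ∂(mconvPow ν (k + 1))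
        = ∫⁻ x, ENNReal.ofReal (x ^ n) * ∫⁻ y, ENNReal.ofReal (y ^ n) ∂(mconvPow ν k) ∂ν := by
          rw [mconvPow, Measure.lintegral_mconv hmeas]
          refine lintegral_congr_ae (hν.mono fun x hx => ?_)
          simp_rw [mul_pow, ENNReal.ofReal_mul (pow_nonneg hx n)]
          exact lintegral_const_mul _ hmeas
      _ = (∫⁻ x, ENNReal.ofReal (x ^ n) ∂ν) ^ (k + 1) := by
          rw [lintegral_mul_const _ hmeas, ih, pow_succ']

lemma ae_nonneg_mconvPow (hν : ∀ᵐ x ∂ν, 0 ≤ x) (k : ℕ) : ∀ᵐ x ∂(mconvPow ν k), 0 ≤ x := by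
  induction k with
  | zero => simp [mconvPow]
  | succ k ih =>
    exact ae_mem_mconv (s := Ici 0) (t := Ici 0) measurableSet_Ici
      (fun _ hx _ hy => mul_nonneg hx hy) hν ih

lemma ae_mem_Icc_mconvPow {R : ℝ} (hR : 0 ≤ R) (hν : ∀ᵐ x ∂ν, x ∈ Icc 0 R) (k : ℕ) :
    ∀ᵐ x ∂(mconvPow ν k), x ∈ Icc 0 (R ^ k) := by
  induction k with
  | zero => simp [mconvPow]
  | succ k ih =>
    refine ae_mem_mconv measurableSet_Icc (fun x hx y hy => ?_) hν ih
    exact ⟨mul_nonneg hx.1 hy.1, pow_succ' R k ▸ mul_le_mul hx.2 hy.2 hy.1 hR⟩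

end RealConvolution

lemma support_subset_Iic_of_lintegral_pow_le {ρ : Measure ℝ} {C : ℝ≥0∞} (hC : C ≠ ∞) {R : ℝ}
    (hR : 0 ≤ R) (h : ∀ n : ℕ, ∫⁻ x, ENNReal.ofReal (x ^ n) ∂ρ ≤ C * ENNReal.ofReal (R ^ n)) :
    ρ.support ⊆ Iic R := by
  intro x hx
  by_contra! hxR
  obtain ⟨u, hRu, hux⟩ := exists_between (notMem_Iic.mp hxR)
  have hu : 0 < u := hR.trans_lt hRu
  have hpos : 0 < ρ (Ioi u) := (Measure.mem_support_iff_forall x).mp hx _ (Ioi_mem_nhds hux)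
  have hbound (n : ℕ) : ρ (Ioi u) ≤ C * ENNReal.ofReal ((R / u) ^ n) := by
    have hun : ENNReal.ofReal (u ^ n) ≠ 0 := by simp [hu]
    refine (ENNReal.mul_le_mul_iff_left hun ENNReal.ofReal_ne_top).mp ?_
    calc ρ (Ioi u) * ENNReal.ofReal (u ^ n)
        ≤ ENNReal.ofReal (u ^ n) * ρ {x | ENNReal.ofReal (u ^ n) ≤ ENNReal.ofReal (x ^ n)} := by
          rw [mul_comm]
          exact mul_le_mul_right (measure_mono fun x hx =>
            ENNReal.ofReal_le_ofReal (pow_le_pow_left₀ hu.le (le_of_lt hx) n)) _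
      _ ≤ ∫⁻ x, ENNReal.ofReal (x ^ n) ∂ρ := mul_meas_ge_le_lintegral₀ (by fun_prop) _
      _ ≤ C * ENNReal.ofReal (R ^ n) := h n
      _ = C * ENNReal.ofReal ((R / u) ^ n) * ENNReal.ofReal (u ^ n) := by
          rw [mul_assoc, ← ENNReal.ofReal_mul (by positivity), ← mul_pow, div_mul_cancel₀ _ hu.ne']
  have hlim : Tendsto (fun n : ℕ => C * ENNReal.ofReal ((R / u) ^ n)) atTop (𝓝 0) := by
    simpa using ENNReal.Tendsto.const_mul (ENNReal.tendsto_ofReal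
      (tendsto_pow_atTop_nhds_zero_of_lt_one (by positivity) ((div_lt_one hu).mpr hRu)))
      (Or.inr hC)
  exact hpos.ne' (le_antisymm (ge_of_tendsto' hlim hbound) zero_le)

lemma ae_le_of_support_subset_Iic {ρ : Measure ℝ} {R : ℝ} (h : ρ.support ⊆ Iic R) :
    ∀ᵐ x ∂ρ, x ≤ R :=
  mem_of_superset Measure.support_mem_ae h

lemma mem_support_of_pow_mem_support_mconvPow {ν : Measure ℝ} [SFinite ν] {T : ℝ} {κ : ℕ}
    (hκ : κ ≠ 0) (hT0 : 0 < T) (hν0 : ∀ᵐ x ∂ν, 0 ≤ x) (hνT : ν.support ⊆ Iic T)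
    (hT : T ^ κ ∈ (mconvPow ν κ).support) : T ∈ ν.support := by
  by_contra hTν
  obtain ⟨l, hlT, hl⟩ := exists_Ioc_subset_of_mem_nhds
    (Measure.isOpen_compl_support.mem_nhds hTν) ⟨0, hT0⟩
  set v := max l 0
  have hνv : ∀ᵐ x ∂ν, x ∈ Icc 0 v := by
    refine (hν0.and (ae_le_of_support_subset_Iic fun x hx => ?_)).mono
      fun x hx => ⟨hx.1, hx.2.trans (le_max_left l 0)⟩
    by_contra! hlx
    exact hl ⟨notMem_Iic.mp hlx, hνT hx⟩ hx
  have hsupp := Measure.support_subset_of_isClosed isClosed_Icc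
    (ae_mem_Icc_mconvPow (le_max_right l 0) hνv κ)
  exact (pow_lt_pow_left₀ (max_lt hlT hT0) (le_max_right l 0) hκ).not_ge (hsupp hT).2

lemma mul_div_pow_mul_div_pow_notMem_Ioo {ν : Measure ℝ} [SFinite ν] {κ : ℕ} {T θ1 θ2 : ℝ}
    (hT0 : T ≠ 0) (hT : T ∈ ν.support) (hhole : mconvPow ν κ (Ioo θ1 θ2) = 0) {u v : ℝ}
    (hu : u ∈ ν.support) (hv : v ∈ ν.support) {j b : ℕ} (hjb : j + b ≤ κ) :
    T ^ κ * (u / T) ^ j * (v / T) ^ b ∉ Ioo θ1 θ2 := by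
  obtain ⟨c, rfl⟩ : ∃ c, κ = j + (b + (c + 0)) := ⟨κ - j - b, by omega⟩
  have hmem := pow_mul_mem_support_mconvPow hu (pow_mul_mem_support_mconvPow hv
    (pow_mul_mem_support_mconvPow hT (one_mem_support_mconvPow_zero ν) c) b) j
  have heq : T ^ (j + (b + (c + 0))) * (u / T) ^ j * (v / T) ^ b =
      u ^ j * (v ^ b * (T ^ c * 1)) := by
    rw [div_pow, div_pow, add_zero, pow_add, pow_add]
    field_simp
  exact heq ▸ fun h => Measure.subset_compl_support_of_isOpen isOpen_Ioo hhole h hmem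

end MeasureTheory

namespace IsRepMeas

variable {a : ℕ → ℝ} {μ ν : Measure ℝ} {θ : ℝ} {κ : ℕ}

lemma measure_univ (h : IsRepMeas a μ) : μ univ = ENNReal.ofReal (a 0) := by
  simpa using h.2.2 0

lemma isFiniteMeasure (h : IsRepMeas a μ) : IsFiniteMeasure μ :=
  ⟨h.measure_univ ▸ ENNReal.ofReal_lt_top⟩

lemma ae_nonneg (h : IsRepMeas a μ) : ∀ᵐ x ∂μ, 0 ≤ x := by
  simpa [ae_iff, ← Iio_def] using h.2.1

lemma integral_pow (h : IsRepMeas a μ) (n : ℕ) : ∫ x, x ^ n ∂μ = a n := by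
  rw [integral_eq_lintegral_of_nonneg_ae (h.ae_nonneg.mono fun x hx => pow_nonneg hx n)
    (by fun_prop), h.2.2 n, ENNReal.toReal_ofReal (h.1 n)]

lemma pow_mconvPow (h : IsRepMeas a μ) (k : ℕ) : IsRepMeas (fun n => a n ^ k) (mconvPow μ k) := by
  have := h.isFiniteMeasure
  refine ⟨fun n => pow_nonneg (h.1 n) k, ?_, fun n => ?_⟩
  · simpa [ae_iff, ← Iio_def] using ae_nonneg_mconvPow h.ae_nonneg k
  · rw [lintegral_ofReal_pow_mconvPow h.ae_nonneg, h.2.2 n, ENNReal.ofReal_pow (h.1 n)]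

lemma eq_of_ae_le {ρ : Measure ℝ} {R : ℝ} (hμ : IsRepMeas a μ) (hρ : IsRepMeas a ρ)
    (hμR : ∀ᵐ x ∂μ, x ≤ R) (hρR : ∀ᵐ x ∂ρ, x ≤ R) : μ = ρ := by
  have := hμ.isFiniteMeasure
  have := hρ.isFiniteMeasure
  refine ext_of_integral_pow_eq (a := 0) (b := R) (hμ.ae_nonneg.and hμR) (hρ.ae_nonneg.and hρR)
    fun n => ?_
  rw [hμ.integral_pow, hρ.integral_pow]

lemma le_mul_pow (h : IsRepMeas a μ) (hθ : ∀ᵐ x ∂μ, x ≤ θ) (hθ0 : 0 ≤ θ) (n : ℕ) :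
    a n ≤ a 0 * θ ^ n := by
  rw [← ENNReal.ofReal_le_ofReal_iff (by have := h.1 0; positivity)]
  calc ENNReal.ofReal (a n) = ∫⁻ x, ENNReal.ofReal (x ^ n) ∂μ := (h.2.2 n).symm
    _ ≤ ∫⁻ _, ENNReal.ofReal (θ ^ n) ∂μ := lintegral_mono_ae <| (h.ae_nonneg.and hθ).mono
        fun x hx => ENNReal.ofReal_le_ofReal (pow_le_pow_left₀ hx.1 hx.2 n)
    _ = ENNReal.ofReal (a 0 * θ ^ n) := by
        rw [lintegral_const, h.measure_univ, ENNReal.ofReal_mul (h.1 0), mul_comm]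

lemma support_subset_Iic_rpow {p : ℝ} (hμ : IsRepMeas a μ) (hθ : μ.support ⊆ Iic θ)
    (hθ0 : 0 ≤ θ) (hp : 0 ≤ p) (hν : IsRepMeas (fun n => a n ^ p) ν) :
    ν.support ⊆ Iic (θ ^ p) := by
  refine support_subset_Iic_of_lintegral_pow_le (C := ENNReal.ofReal (a 0 ^ p))
    ENNReal.ofReal_ne_top (by positivity) fun n => ?_
  rw [hν.2.2 n, ← ENNReal.ofReal_mul (by have := hμ.1 0; positivity)]
  refine ENNReal.ofReal_le_ofReal ?_
  calc a n ^ p ≤ (a 0 * θ ^ n) ^ p :=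
        Real.rpow_le_rpow (hμ.1 n) (hμ.le_mul_pow (ae_le_of_support_subset_Iic hθ) hθ0 n) hp
    _ = a 0 ^ p * (θ ^ p) ^ n := by
        rw [Real.mul_rpow (hμ.1 0) (by positivity), Real.rpow_pow_comm hθ0]

lemma eq_mconvPow_of_rpow (hκ : κ ≠ 0) (hμ : IsRepMeas a μ) (hθ : μ.support ⊆ Iic θ)
    (hθ0 : 0 ≤ θ) (hν : IsRepMeas (fun n => a n ^ (1 / (κ : ℝ))) ν) : μ = mconvPow ν κ := by
  have := hν.isFiniteMeasure
  have hpow (x : ℝ) (hx : 0 ≤ x) : (x ^ (1 / (κ : ℝ))) ^ κ = x := by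
    rw [one_div, Real.rpow_inv_natCast_pow hx hκ]
  have hrep : IsRepMeas a (mconvPow ν κ) := by
    convert hν.pow_mconvPow κ using 1
    exact funext fun n => (hpow _ (hμ.1 n)).symm
  have hνT : ∀ᵐ x ∂ν, x ∈ Icc 0 (θ ^ (1 / (κ : ℝ))) := hν.ae_nonneg.and
    (ae_le_of_support_subset_Iic (hμ.support_subset_Iic_rpow hθ hθ0 (by positivity) hν))
  refine hμ.eq_of_ae_le hrep (ae_le_of_support_subset_Iic hθ)
    ((ae_mem_Icc_mconvPow (by positivity) hνT κ).mono fun x hx => ?_)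
  exact hx.2.trans_eq (hpow θ hθ0)

lemma rpow_mem_support_of_isLUB (hκ : κ ≠ 0) (hμ : IsRepMeas a μ)
    (hν : IsRepMeas (fun n => a n ^ (1 / (κ : ℝ))) ν) (hθ : IsLUB μ.support θ) (hθ0 : 0 < θ) :
    θ ^ (1 / (κ : ℝ)) ∈ ν.support := by
  have := hν.isFiniteMeasure
  have hθμ : θ ∈ μ.support := hθ.mem_of_isClosed
    (nonempty_iff_ne_empty.mpr fun h => not_isBot θ (isLUB_empty_iff.mp (h ▸ hθ)))
    Measure.isClosed_support
  refine mem_support_of_pow_mem_support_mconvPow hκ (by positivity) hν.ae_nonneg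
    (hμ.support_subset_Iic_rpow hθ.1 hθ0.le (by positivity) hν) ?_
  rw [one_div, Real.rpow_inv_natCast_pow hθ0.le hκ, ← hμ.eq_mconvPow_of_rpow hκ hθ.1 hθ0.le hν]
  exact hθμ

lemma mul_div_rpow_pow_notMem_Ioo {θ1 θ2 : ℝ} (hκ : κ ≠ 0) (hμ : IsRepMeas a μ)
    (hν : IsRepMeas (fun n => a n ^ (1 / (κ : ℝ))) ν) (hθ : IsLUB μ.support θ) (hθ0 : 0 < θ)
    (hhole : μ (Ioo θ1 θ2) = 0) {u v : ℝ} (hu : u ∈ ν.support) (hv : v ∈ ν.support) {j b : ℕ}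
    (hjb : j + b ≤ κ) :
    θ * (u / θ ^ (1 / (κ : ℝ))) ^ j * (v / θ ^ (1 / (κ : ℝ))) ^ b ∉ Ioo θ1 θ2 := by
  have := hν.isFiniteMeasure
  have hθκ : (θ ^ (1 / (κ : ℝ))) ^ κ = θ := by rw [one_div, Real.rpow_inv_natCast_pow hθ0.le hκ]
  simpa only [hθκ] using mul_div_pow_mul_div_pow_notMem_Ioo (by positivity)
    (hμ.rpow_mem_support_of_isLUB hκ hν hθ hθ0)
    (hμ.eq_mconvPow_of_rpow hκ hθ.1 hθ0.le hν ▸ hhole) hu hv hjb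

end IsRepMeas

section Hole

variable {θ1 θ2 θ3 : ℝ} {κ : ℕ}

lemma mul_le_of_forall_geom_notMem_Ioo {c q : ℝ} (hq : 0 ≤ q) (hc : θ1 < c) {N : ℕ}
    (hN : c * q ^ N < θ2) (h : ∀ j ≤ N, c * q ^ j ∉ Ioo θ1 θ2) : θ2 * q ≤ θ1 := by
  induction N with
  | zero => exact absurd ⟨by simpa using hc, by simpa using hN⟩ (h 0 le_rfl)
  | succ N ih =>
    by_cases hN' : c * q ^ N < θ2
    · exact ih hN' fun j hj => h j (hj.trans N.le_succ)
    · calc θ2 * q ≤ c * q ^ N * q := mul_le_mul_of_nonneg_right (not_lt.mp hN') hq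
        _ = c * q ^ (N + 1) := by ring
        _ ≤ θ1 := not_lt.mp fun h1 => h (N + 1) le_rfl ⟨h1, hN⟩

lemma div_le_div_of_forall_pow_notMem_Ioo {s : ℝ} (hκ : κ ≠ 0) (h1 : 0 < θ1) (h12 : θ1 < θ2)
    (hs : 0 < s) (hlow : θ1 < θ3 * s) (hup : θ3 * s ^ κ < θ2)
    (h : ∀ j ≤ κ, θ3 * s ^ j ∉ Ioo θ1 θ2) : θ2 / θ1 ≤ θ3 / θ2 := by
  have hratio : θ2 * s ≤ θ1 := by
    refine mul_le_of_forall_geom_notMem_Ioo hs.le hlow (N := κ - 1) ?_ fun j hj => ?_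
    · rwa [mul_assoc, ← pow_succ', Nat.sub_add_cancel (Nat.one_le_iff_ne_zero.mpr hκ)]
    · rw [mul_assoc, ← pow_succ']
      exact h _ (by omega)
  have hfirst : θ2 ≤ θ3 * s :=
    not_lt.mp fun h2 => h 1 (by omega) ⟨by simpa using hlow, by simpa using h2⟩
  rw [div_le_div_iff₀ h1 (h1.trans h12)]
  nlinarith [mul_le_mul_of_nonneg_left hfirst (h1.trans h12).le]

lemma div_pow_le_div_of_forall_mul_pow_notMem_Ioo {s t : ℝ} (hκ : κ ≠ 0) (h1 : 0 < θ1)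
    (h12 : θ1 < θ2) (ht : 0 < t) (hst : s < t) (htκ : θ3 * t ^ κ = θ2) (hlow : θ1 < θ3 * s)
    (h : ∀ j < κ, θ3 * s * t ^ j ∉ Ioo θ1 θ2) : (θ2 / θ1) ^ κ ≤ θ3 / θ2 := by
  have h3 : 0 < θ3 := pos_of_mul_pos_left (htκ ▸ h1.trans h12) (by positivity)
  have hratio : θ2 * t ≤ θ1 := by
    refine mul_le_of_forall_geom_notMem_Ioo ht.le hlow (N := κ - 1) ?_ fun j hj => h j (by omega)
    calc θ3 * s * t ^ (κ - 1) < θ3 * t * t ^ (κ - 1) := by gcongr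
      _ = θ2 := by
        rw [mul_assoc, ← pow_succ', Nat.sub_add_cancel (Nat.one_le_iff_ne_zero.mpr hκ), htκ]
  have h2 : 0 < θ2 := h1.trans h12
  calc (θ2 / θ1) ^ κ ≤ (1 / t) ^ κ :=
        pow_le_pow_left₀ (by positivity) ((div_le_div_iff₀ h1 ht).mpr (by linarith)) κ
    _ = θ3 / θ2 := by rw [← htκ, div_pow, one_pow]; field_simp

lemma div_le_div_and_div_pow_le_div_of_forall_notMem_Ioo {S : Set ℝ} {T y β : ℝ} (hκ : κ ≠ 0)
    (h1 : 0 < θ1) (h12 : θ1 < θ2) (hT : 0 < T) (hTκ : T ^ κ = θ3) (hβκ : β ^ κ = θ2)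
    (hy : y ∈ Ioo (θ1 / θ3 * T) β) (hyS : y ∈ S)
    (havoid : ∀ u ∈ S, ∀ v ∈ S, ∀ j b : ℕ, j + b ≤ κ →
      θ3 * (u / T) ^ j * (v / T) ^ b ∉ Ioo θ1 θ2) :
    θ2 / θ1 ≤ θ3 / θ2 ∧ (β ∈ S → (θ2 / θ1) ^ κ ≤ θ3 / θ2) := by
  have h3 : 0 < θ3 := hTκ ▸ pow_pos hT κ
  have hy0 : 0 < y := lt_trans (by positivity) hy.1
  have hyβ : y / T < β / T := div_lt_div_of_pos_right hy.2 hT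
  have hβκ' : θ3 * (β / T) ^ κ = θ2 := by rw [div_pow, hTκ, mul_div_cancel₀ _ h3.ne', hβκ]
  have hlow : θ1 < θ3 * (y / T) := by
    have := hy.1
    rw [div_mul_eq_mul_div, div_lt_iff₀ h3] at this
    rw [mul_div_assoc', lt_div_iff₀ hT]
    linarith
  refine ⟨div_le_div_of_forall_pow_notMem_Ioo hκ h1 h12 (div_pos hy0 hT) hlow
    (hβκ' ▸ by gcongr) fun j hj => by simpa using havoid y hyS y hyS j 0 (by omega),
    fun hβS => div_pow_le_div_of_forall_mul_pow_notMem_Ioo hκ h1 h12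
      (div_pos (hy0.trans hy.2) hT) hyβ hβκ' hlow fun j hj => ?_⟩
  simpa using havoid y hyS β hβS 1 j (by omega)

lemma natCast_le_floor_log_div_log_iff {x y : ℝ} (hx : 1 < x) (hy : 0 < y) (m : ℕ) :
    (m : ℤ) ≤ ⌊Real.log y / Real.log x⌋ ↔ x ^ m ≤ y := by
  rw [Int.le_floor, Int.cast_natCast, le_div_iff₀ (Real.log_pos hx), ← Real.log_pow,
    Real.log_le_log_iff (by positivity) hy]

lemma lt_or_lt_pow_of_iota {P : Prop} {ιs ιss : ℤ} (hκ : 2 ≤ κ) (h1 : 0 < θ1) (h12 : θ1 < θ2)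
    (h23 : θ2 < θ3) (hs : ιs = 1 + ⌊Real.log (θ3 / θ1) / Real.log (θ3 / θ2)⌋)
    (hss : ιss = 1 + ⌊Real.log (θ3 / θ2) / Real.log (θ2 / θ1)⌋)
    (hcond : (ιss ≤ κ ∧ P) ∨ (ιss ≤ ιs ∧ P) ∨ (3 ≤ ιs ∧ P) ∨ 4 ≤ ιs ∨ ιss = 1) :
    θ3 / θ2 < θ2 / θ1 ∨ (P ∧ θ3 / θ2 < (θ2 / θ1) ^ κ) := by
  have h2 : 0 < θ2 := h1.trans h12
  set x := θ3 / θ2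
  set r := θ2 / θ1
  have hx : 1 < x := (one_lt_div h2).mpr h23
  have hr : 1 < r := (one_lt_div h1).mpr h12
  have hxr : θ3 / θ1 = x * r := by simp only [x, r]; field_simp
  have hιs (m : ℕ) : (m : ℤ) + 1 ≤ ιs ↔ x ^ m ≤ x * r := by
    rw [hs, hxr, add_comm, add_le_add_iff_left,
      natCast_le_floor_log_div_log_iff hx (by positivity)]
  have hιss (m : ℕ) : (m : ℤ) + 1 ≤ ιss ↔ r ^ m ≤ x := by
    rw [hss, add_comm, add_le_add_iff_left, natCast_le_floor_log_div_log_iff hr (by positivity)]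
  have hr_lt : r < r ^ κ := lt_self_pow₀ hr (by omega)
  have hx_le_r (h : 3 ≤ ιs) : x ≤ r :=
    le_of_mul_le_mul_left (by simpa [sq] using (hιs 2).mp (by omega)) (by positivity : 0 < x)
  rcases hcond with ⟨hi, hP⟩ | ⟨hii, hP⟩ | ⟨hiii, hP⟩ | hiv | hv
  · exact .inr ⟨hP, not_le.mp fun h => by have := (hιss κ).mpr h; omega⟩
  · refine .inr ⟨hP, not_le.mp fun h => ?_⟩
    have := (hιss κ).mpr h
    exact (h.trans (hx_le_r (by omega))).not_gt hr_lt
  · exact .inr ⟨hP, (hx_le_r hiii).trans_lt hr_lt⟩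
  · have hx3 := (hιs 3).mp (by omega)
    rw [pow_succ'] at hx3
    exact .inl ((lt_self_pow₀ hx one_lt_two).trans_le
      (le_of_mul_le_mul_left hx3 (by positivity)))
  · exact .inl (not_le.mp fun h => by have := (hιss 1).mpr (by simpa using h); omega)

end Hole

theorem stmt15 (a : ℕ → ℝ) (μ ν : Measure ℝ) (κ : ℕ) (hκ : 2 ≤ κ)
    (hμ : IsRepMeas a μ)
    (hν : IsRepMeas (fun n => a n ^ (1 / (κ : ℝ))) ν)
    (θ1 θ2 θ3 : ℝ) (h1 : 0 < θ1) (h12 : θ1 < θ2) (h23 : θ2 < θ3)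
    (hθ3 : IsLUB (msupport μ) θ3)
    (hhole : μ (Set.Ioo θ1 θ2) = 0)
    (α β : ℝ)
    (hα : α = θ1 / θ3 * θ3 ^ (1 / (κ : ℝ)))
    (hβ : β = θ2 ^ (1 / (κ : ℝ)))
    (ιs ιss : ℤ)
    (hs : ιs = 1 + ⌊Real.log (θ3 / θ1) / Real.log (θ3 / θ2)⌋)
    (hss : ιss = 1 + ⌊Real.log (θ3 / θ2) / Real.log (θ2 / θ1)⌋)
    (hcond : (ιss ≤ (κ : ℤ) ∧ β ∈ msupport ν) ∨
      (ιss ≤ ιs ∧ β ∈ msupport ν) ∨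
      (3 ≤ ιs ∧ β ∈ msupport ν) ∨
      4 ≤ ιs ∨
      ιss = 1) :
    ν (Set.Ioo α β) = 0 := by
  have hκ0 : κ ≠ 0 := by omega
  have h3 : 0 < θ3 := by linarith
  have hroot {x : ℝ} (hx : 0 ≤ x) : (x ^ (1 / (κ : ℝ))) ^ κ = x := by
    rw [one_div, Real.rpow_inv_natCast_pow hx hκ0]
  rw [msupport_eq_support] at hθ3 hcond
  refine measure_mono_null ?_ (Measure.measure_compl_support (μ := ν))
  intro y hy hyν
  obtain ⟨hE1, hE2⟩ := div_le_div_and_div_pow_le_div_of_forall_notMem_Ioo hκ0 h1 h12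
    (by positivity) (hroot h3.le) (hβ ▸ hroot (h1.trans h12).le) (hα ▸ hy) hyν
    fun u hu v hv j b hjb => hμ.mul_div_rpow_pow_notMem_Ioo hκ0 hν hθ3 h3 hhole hu hv hjb
  rcases lt_or_lt_pow_of_iota hκ h1 h12 h23 hs hss hcond with hlt | ⟨hβν, hlt⟩
  · exact hlt.not_ge hE1
  · exact hlt.not_ge (hE2 hβν)
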